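/- For every integer n with 1 ≤ n ≤ 4 and every odd positive integer k with k ≤ 2n−1, there exists a closed k-prince's tour on the 2n×2n chessboard. -/

import Mathlib

/-!
For each of the ten admissible pairs `(n, k)` an explicit tour, found by computer search, is
written down as a cyclic list of cells, and `decide` checks that it lists every cell once with
cyclically consecutive cells a `k`-prince move apart. Such a list of at least three vertices
closes up into a Hamiltonian cycle.
-/

/-- The `k`-prince graph on an `m × n` board: cells `(i,j)` and `(u,v)` are adjacent
iff `|i - u| + |j - v| = k`. -/
def princeGraph (m n k : ℕ) : SimpleGraph (Fin m × Fin n) where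
  Adj p q := p ≠ q ∧ |(p.1 : ℤ) - (q.1 : ℤ)| + |(p.2 : ℤ) - (q.2 : ℤ)| = k
  symm := ⟨by
    rintro p q ⟨hne, h⟩
    refine ⟨hne.symm, ?_⟩
    rw [abs_sub_comm ((q.1 : ℤ)), abs_sub_comm ((q.2 : ℤ))]
    exact h⟩
  loopless := ⟨fun p h => h.1 rfl⟩

namespace SimpleGraph

variable {V : Type*} (G : SimpleGraph V)

/-- `l ++ l.take 1` appends the first vertex at the end, so the last vertex of `l` must also be
adjacent to the first. -/
def IsClosedTour (l : List V) : Prop :=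
  l.Nodup ∧ (∀ v, v ∈ l) ∧ 3 ≤ l.length ∧ (l ++ l.take 1).IsChain G.Adj

instance [DecidableEq V] [Fintype V] [DecidableRel G.Adj] : DecidablePred G.IsClosedTour :=
  fun _ => inferInstanceAs (Decidable (_ ∧ _ ∧ _ ∧ _))

variable {G}

open Walk

theorem exists_walk_support_eq_of_isChain {u v : V} {l : List V}
    (hchain : (u :: (l ++ [v])).IsChain G.Adj) :
    ∃ p : G.Walk u v, p.support = u :: (l ++ [v]) :=
  ⟨(ofSupport _ (List.cons_ne_nil _ _) hchain).copy List.head_cons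
    ((List.getLast_cons _).trans List.getLast_concat), by rw [support_copy, support_ofSupport]⟩

theorem IsClosedTour.exists_isHamiltonianCycle [DecidableEq V] {l : List V}
    (hl : G.IsClosedTour l) : ∃ v, ∃ p : G.Walk v v, p.IsHamiltonianCycle := by
  obtain ⟨hnodup, hmem, hlen, hchain⟩ := hl
  obtain _ | ⟨v, l⟩ := l
  · simp at hlen
  obtain ⟨p, hp⟩ := exists_walk_support_eq_of_isChain (G := G) (by simpa using hchain)
  have hnot_nil : ¬ p.Nil := by
    simp [nil_iff_support_eq, hp]
  have htail : p.tail.support = l ++ [v] := by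
    rw [support_tail_of_not_nil _ hnot_nil, hp, List.tail_cons]
  have htail_nodup : p.tail.support.Nodup := by
    rwa [htail, List.nodup_append_comm]
  have hcycle : p.IsCycle := by
    refine isCycle_iff_isPath_tail_and_le_length.mpr ⟨(isPath_def _).mpr htail_nodup, ?_⟩
    have hlength := congrArg List.length hp
    simp only [length_support, List.length_cons, List.length_append] at hlength hlen
    omega
  refine ⟨v, p, isHamiltonianCycle_iff_isCycle_and_support_count_tail_eq_one.mpr
    ⟨hcycle, fun w => ?_⟩⟩
  rw [← support_tail_of_not_nil _ hnot_nil]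
  exact List.count_eq_one_of_mem htail_nodup (by simpa [htail, or_comm] using hmem w)

end SimpleGraph

instance (m n k : ℕ) : DecidableRel (princeGraph m n k).Adj :=
  fun _ _ => inferInstanceAs (Decidable (_ ∧ _))

/-- `[]` outside the ten pairs `(n, k)` of the theorem. -/
def princeTour : (n k : ℕ) → List (Fin (2 * n) × Fin (2 * n))
  | 1, 1 =>
    [(0,1), (1,1), (1,0), (0,0)]
  | 2, 1 =>
    [(0,1), (0,2), (0,3), (1,3), (1,2), (1,1), (2,1), (2,2), (2,3), (3,3), (3,2), (3,1), (3,0),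
      (2,0), (1,0), (0,0)]
  | 2, 3 =>
    [(0,3), (1,1), (3,0), (2,2), (0,1), (1,3), (1,0), (3,1), (2,3), (0,2), (3,2), (2,0), (1,2),
      (3,3), (2,1), (0,0)]
  | 3, 1 =>
    [(0,1), (0,2), (0,3), (0,4), (0,5), (1,5), (1,4), (1,3), (1,2), (1,1), (2,1), (2,2), (2,3),
      (2,4), (2,5), (3,5), (3,4), (3,3), (3,2), (3,1), (4,1), (4,2), (4,3), (4,4), (4,5), (5,5),
      (5,4), (5,3), (5,2), (5,1), (5,0), (4,0), (3,0), (2,0), (1,0), (0,0)]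
  | 3, 3 =>
    [(0,3), (1,5), (4,5), (5,3), (5,0), (2,0), (0,1), (0,4), (1,2), (2,4), (0,5), (0,2), (1,0),
      (3,1), (2,3), (1,1), (4,1), (4,4), (1,4), (3,5), (3,2), (4,0), (5,2), (5,5), (2,5), (1,3),
      (3,4), (2,2), (4,3), (5,1), (2,1), (3,3), (5,4), (4,2), (3,0), (0,0)]
  | 3, 5 =>
    [(2,3), (4,0), (1,2), (5,1), (3,4), (0,2), (4,1), (1,3), (4,5), (2,2), (5,4), (3,1), (1,4),
      (5,5), (3,2), (0,4), (4,3), (1,5), (0,1), (2,4), (1,0), (3,3), (0,5), (1,1), (5,2), (2,0),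
      (2,5), (4,2), (0,3), (3,5), (2,1), (5,3), (3,0), (4,4), (5,0), (0,0)]
  | 4, 1 =>
    [(1,0), (2,0), (3,0), (4,0), (5,0), (6,0), (7,0), (7,1), (7,2), (7,3), (7,4), (7,5), (7,6),
      (7,7), (6,7), (5,7), (4,7), (3,7), (2,7), (1,7), (0,7), (0,6), (1,6), (2,6), (3,6), (4,6),
      (5,6), (6,6), (6,5), (5,5), (4,5), (3,5), (2,5), (1,5), (0,5), (0,4), (1,4), (2,4), (3,4),
      (4,4), (5,4), (6,4), (6,3), (6,2), (6,1), (5,1), (4,1), (3,1), (2,1), (1,1), (1,2), (2,2),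
      (3,2), (4,2), (5,2), (5,3), (4,3), (3,3), (2,3), (1,3), (0,3), (0,2), (0,1), (0,0)]
  | 4, 3 =>
    [(3,0), (6,0), (7,2), (7,5), (6,7), (3,7), (0,7), (0,4), (1,6), (4,6), (7,6), (5,7), (2,7),
      (0,6), (0,3), (1,1), (4,1), (7,1), (5,0), (2,0), (0,1), (2,2), (1,0), (0,2), (1,4), (1,7),
      (0,5), (1,3), (2,5), (5,5), (6,3), (6,6), (7,4), (7,7), (4,7), (2,6), (5,6), (6,4), (3,4),
      (1,5), (3,6), (4,4), (6,5), (3,5), (2,3), (5,3), (4,5), (3,3), (5,2), (3,1), (1,2), (4,2),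
      (6,1), (7,3), (7,0), (6,2), (5,4), (5,1), (3,2), (4,0), (4,3), (2,4), (2,1), (0,0)]
  | 4, 5 =>
    [(5,0), (1,1), (0,5), (3,7), (7,6), (7,1), (6,5), (6,0), (1,0), (5,1), (0,1), (0,6), (2,3),
      (1,7), (1,2), (4,0), (4,5), (7,3), (6,7), (6,2), (5,6), (1,5), (3,2), (2,6), (2,1), (0,4),
      (5,4), (7,7), (7,2), (3,3), (7,4), (4,6), (0,7), (3,5), (3,0), (4,4), (2,7), (2,2), (6,1),
      (5,5), (1,6), (6,6), (4,3), (0,2), (3,4), (5,7), (6,3), (2,4), (4,1), (1,3), (5,2), (2,0),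
      (0,3), (3,1), (7,0), (7,5), (2,5), (4,2), (4,7), (6,4), (3,6), (5,3), (1,4), (0,0)]
  | 4, 7 =>
    [(4,3), (0,6), (3,2), (1,7), (5,4), (1,1), (4,5), (0,2), (3,6), (2,0), (6,3), (1,5), (5,2),
      (2,6), (1,0), (4,4), (0,1), (3,5), (7,2), (2,4), (6,1), (5,7), (2,3), (7,1), (3,4), (7,7),
      (0,7), (3,3), (6,7), (6,0), (7,6), (4,2), (1,6), (5,3), (2,7), (7,5), (5,0), (6,6), (4,1),
      (3,7), (1,2), (4,6), (2,1), (5,5), (7,0), (2,2), (7,4), (1,3), (5,6), (0,4), (3,0), (6,4),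
      (0,5), (3,1), (6,5), (4,0), (4,7), (5,1), (1,4), (6,2), (0,3), (7,3), (2,5), (0,0)]
  | _, _ => []

theorem isClosedTour_princeTour {n k : ℕ} (hn : n ≤ 4) (hk : Odd k) (hkn : k ≤ 2 * n - 1) :
    (princeGraph (2 * n) (2 * n) k).IsClosedTour (princeTour n k) := by
  interval_cases n <;> interval_cases k <;> first | exact absurd hk (by decide) | decide +kernel

theorem prince_tour_small_even_boards_general (n k : ℕ) (hn4 : n ≤ 4)
    (hk : Odd k) (hkle : k ≤ 2 * n - 1) :
    ∃ (v : Fin (2 * n) × Fin (2 * n)) (p : (princeGraph (2 * n) (2 * n) k).Walk v v),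
      p.IsHamiltonianCycle :=
  (isClosedTour_princeTour hn4 hk hkle).exists_isHamiltonianCycle

/-- For every `1 ≤ n ≤ 4` and every odd positive `k ≤ 2n - 1`, there exists a closed
`k`-prince's tour on the `2n × 2n` chessboard. -/
theorem prince_tour_small_even_boards (n k : ℕ) (hn1 : 1 ≤ n) (hn4 : n ≤ 4)
    (hk : Odd k) (hkpos : 0 < k) (hkle : k ≤ 2 * n - 1) :
    ∃ (v : Fin (2 * n) × Fin (2 * n)) (p : (princeGraph (2 * n) (2 * n) k).Walk v v),
      p.IsHamiltonianCycle :=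
  prince_tour_small_even_boards_general n k hn4 hk hkle
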